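/- arXiv:2210.16808 — 2 statements merged into one kernel-verified Lean document; each statement's English description precedes it below -/
import Mathlib

section
/- There exists a constant C > 0 such that the following holds for every τ ≥ 2. Let ξ_1, …, ξ_n be i.i.d. real random variables with E ξ_1² ≤ 1 and Pr(|ξ_1| ≥ t) ≤ t^{−τ} for all t > 0, and set μ_i := (C/√n)·(n/i)^{1/τ} for i = 1, …, n. Then for every 1 ≤ i ≤ n, E( |ξ|_(i)/(√n·μ_i) ) ≤ 1/10, where |ξ|_(i) denotes the i-th largest value among |ξ_1|, …, |ξ_n|. -/
open MeasureTheory ProbabilityTheory Matrix Finset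
open scoped ENNReal NNReal

noncomputable section

namespace Paper

/-- The `i`-th largest (0-indexed) absolute value of the coordinates of `v`. -/
def ordAbs {m : ℕ} (v : Fin m → ℝ) (i : Fin m) : ℝ :=
  |v (Tuple.sort (fun j => |v j|) i.rev)|

/-- Sorted ℓ¹ norm with weight sequence `γ`. -/
def snorm {m : ℕ} (γ : Fin m → ℝ) (v : Fin m → ℝ) : ℝ :=
  ∑ i, γ i * ordAbs v i

/-- Squared Euclidean norm. -/
def sq2 {m : ℕ} (v : Fin m → ℝ) : ℝ := ∑ i, (v i) ^ 2

/-- Squared `Σ`-norm `⟨Σ u, u⟩`. -/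
def sqS {p : ℕ} (S : Matrix (Fin p) (Fin p) ℝ) (u : Fin p → ℝ) : ℝ :=
  u ⬝ᵥ S.mulVec u

/-- Number of nonzero coordinates of a vector. -/
def spars {m : ℕ} (v : Fin m → ℝ) : ℕ := {i | v i ≠ 0}.ncard

/-- Slope weights `λ_i = C √(log(e·m/i)/n)`, `i = 1, …, m` (here `i : Fin m` is 0-indexed). -/
def lamW (C : ℝ) (n m : ℕ) (i : Fin m) : ℝ :=
  C * Real.sqrt (Real.log (Real.exp 1 * m / ((i : ℕ) + 1)) / n)

/-- Sum of the squares of the `s` largest weights: `Σ_{i=1}^s γ_i²`. -/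
def headSum {m : ℕ} (s : ℕ) (γ : Fin m → ℝ) : ℝ :=
  ∑ i ∈ Finset.univ.filter (fun i : Fin m => (i : ℕ) < s), (γ i) ^ 2

/-- Restricted eigenvalue condition: `‖u‖_Σ² ≥ κ ‖u‖₂²` on the cone `C(s,4)`. -/
def RE {p : ℕ} (S : Matrix (Fin p) (Fin p) ℝ) (lam : Fin p → ℝ) (s : ℕ) (κ : ℝ) : Prop :=
  ∀ u : Fin p → ℝ,
    snorm lam u ≤ 4 * Real.sqrt (headSum s lam) * Real.sqrt (sq2 u) →
    κ * sq2 u ≤ sqS S u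

/-- The square-root Slope loss
`L(β,θ) = (‖Y − Xβ − √n θ‖₂²/(2n))^{1/2} + ‖β‖_λ + ‖θ‖_μ`. -/
def loss {n p : ℕ} (Y : Fin n → ℝ) (X : Matrix (Fin n) (Fin p) ℝ)
    (lam : Fin p → ℝ) (mu : Fin n → ℝ) (β : Fin p → ℝ) (θ : Fin n → ℝ) : ℝ :=
  Real.sqrt (sq2 (fun i => Y i - X.mulVec β i - Real.sqrt n * θ i) / (2 * n)) +
    snorm lam β + snorm mu θ

/-- The rows of `Z` are i.i.d. centered isotropic 1-sub-Gaussian random vectors. -/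
def SubGaussianDesign {Ω : Type} [MeasurableSpace Ω] (μ : Measure Ω)
    (n p : ℕ) (Z : Ω → Fin n → Fin p → ℝ) : Prop :=
  (∀ i, Measurable fun ω => Z ω i) ∧
  iIndepFun (fun i ω => Z ω i) μ ∧
  (∀ i j, IdentDistrib (fun ω => Z ω i) (fun ω => Z ω j) μ μ) ∧
  (∀ i j, ∫ ω, Z ω i j ∂μ = 0) ∧
  (∀ i j k, ∫ ω, Z ω i j * Z ω i k ∂μ = if j = k then (1 : ℝ) else 0) ∧
  (∀ i (v : Fin p → ℝ),
    ∫ ω, Real.exp (∑ j, v j * Z ω i j) ∂μ ≤ Real.exp (sq2 v / 2))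

/-- The coordinates of `ξ` are i.i.d. -/
def IIDCoords {Ω : Type} [MeasurableSpace Ω] (μ : Measure Ω)
    (n : ℕ) (ξ : Ω → Fin n → ℝ) : Prop :=
  (∀ i, Measurable fun ω => ξ ω i) ∧
  iIndepFun (fun i ω => ξ ω i) μ ∧
  (∀ i j, IdentDistrib (fun ω => ξ ω i) (fun ω => ξ ω j) μ μ)

/-- The design matrix `X = Z Σ^{1/2}` built from the rows `Z` and a square root `Rt` of `Σ`. -/
def designX {n p : ℕ} (Z : Fin n → Fin p → ℝ) (Rt : Matrix (Fin p) (Fin p) ℝ) :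
    Matrix (Fin n) (Fin p) ℝ :=
  Matrix.of Z * Rt

end Paper

/-!
Fix a level `a > 0`. Deterministically, the `i`-th largest of the `|ξ_j|` exceeds `a` by at most
the average of the excesses `(|ξ_j| - a)⁺` over the top `i` coordinates, hence by at most
`(1/i) ∑_j (|ξ_j| - a)⁺`. By the layer-cake formula and the tail bound,
`E (|ξ_j| - a)⁺ ≤ ∫_a^∞ s^{-τ} ds = a^{1-τ}/(τ-1)`, so `E |ξ|_(i) ≤ a + (n/i) a^{1-τ}/(τ-1)`.
The choice `a = (n/i)^{1/τ}` makes the second term `a/(τ-1) ≤ a`, so `E |ξ|_(i) ≤ 2a`, and `C = 20`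
turns this into the bound `1/10`.
-/

open Set

namespace Paper

lemma ordAbs_le_add_sum_excess {m : ℕ} (v : Fin m → ℝ) (i : Fin m) (a : ℝ) :
    ordAbs v i ≤ a + (∑ j, max (|v j| - a) 0) / ((i : ℕ) + 1) := by
  set f : Fin m → ℝ := fun j => |v j|
  set σ := Tuple.sort f
  have hmono : Monotone (f ∘ σ) := Tuple.monotone_sort f
  have hcard : #(Ici i.rev) = (i : ℕ) + 1 := by
    rw [Fin.card_Ici, Fin.val_rev]
    omega
  -- the sorted positions `≥ i.rev` carry the `i + 1` largest values
  have htop : (((i : ℕ) + 1 : ℕ) : ℝ) * (ordAbs v i - a) ≤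
      ∑ l ∈ Ici i.rev, max (f (σ l) - a) 0 := by
    rw [← nsmul_eq_mul, ← hcard]
    refine card_nsmul_le_sum _ _ _ fun l hl => le_max_of_le_left ?_
    exact sub_le_sub_right (hmono (mem_Ici.mp hl)) a
  have hall : ∑ l ∈ Ici i.rev, max (f (σ l) - a) 0 ≤ ∑ j, max (|v j| - a) 0 := by
    rw [← Equiv.sum_comp σ (fun j => max (f j - a) 0)]
    exact sum_le_sum_of_subset_of_nonneg (subset_univ _) fun _ _ _ => le_max_right _ _
  push_cast at htop
  rw [← sub_le_iff_le_add', le_div_iff₀ (by positivity)]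
  linarith

lemma lintegral_Ioi_zero_ofReal_add_rpow_neg {a τ : ℝ} (ha : 0 < a) (hτ : 1 < τ) :
    ∫⁻ t in Ioi (0 : ℝ), ENNReal.ofReal ((a + t) ^ (-τ)) =
      ENNReal.ofReal (a ^ (1 - τ) / (τ - 1)) := by
  have hshift : ∫⁻ t in Ioi (0 : ℝ), ENNReal.ofReal ((a + t) ^ (-τ)) =
      ∫⁻ s in Ioi a, ENNReal.ofReal (s ^ (-τ)) := by
    have hpre : (a + ·) ⁻¹' Ioi a = Ioi (0 : ℝ) := by ext; simp
    rw [← hpre]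
    exact (measurePreserving_add_left volume a).setLIntegral_comp_preimage_emb
      (MeasurableEquiv.addLeft a).measurableEmbedding (fun s => ENNReal.ofReal (s ^ (-τ))) _
  have hval : ∫ s in Ioi a, s ^ (-τ) = a ^ (1 - τ) / (τ - 1) := by
    rw [integral_Ioi_rpow_of_lt (by linarith) ha, show -τ + 1 = 1 - τ by ring, neg_div,
      ← div_neg, neg_sub]
  rw [hshift, ← hval, ofReal_integral_eq_lintegral_ofReal
    (integrableOn_Ioi_rpow_of_lt (by linarith) ha)]
  filter_upwards [ae_restrict_mem measurableSet_Ioi] with s hs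
  exact Real.rpow_nonneg (ha.trans hs).le _

section Tail

variable {Ω : Type*} [MeasurableSpace Ω] {μ : Measure Ω} {X : Ω → ℝ} {a τ : ℝ}

lemma lintegral_excess_le_of_tail (hX : Measurable X) (ha : 0 < a) (hτ : 1 < τ)
    (htail : ∀ t : ℝ, 0 < t → μ {ω | t ≤ |X ω|} ≤ ENNReal.ofReal (t ^ (-τ))) :
    ∫⁻ ω, ENNReal.ofReal (max (|X ω| - a) 0) ∂μ ≤ ENNReal.ofReal (a ^ (1 - τ) / (τ - 1)) := by
  rw [lintegral_eq_lintegral_meas_le μ (ae_of_all _ fun ω => le_max_right (|X ω| - a) 0)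
    ((hX.abs.sub_const a).max measurable_const).aemeasurable,
    ← lintegral_Ioi_zero_ofReal_add_rpow_neg ha hτ]
  refine setLIntegral_mono' measurableSet_Ioi fun t (ht : 0 < t) => ?_
  have hlevel : {ω | t ≤ max (|X ω| - a) 0} = {ω | a + t ≤ |X ω|} := by
    ext ω
    simp only [mem_ofPred_eq, le_max_iff, not_le.mpr ht, or_false]
    constructor <;> intro h <;> linarith
  rw [hlevel]
  exact htail _ (by linarith)

lemma integrable_excess_of_tail (hX : Measurable X) (ha : 0 < a) (hτ : 1 < τ)
    (htail : ∀ t : ℝ, 0 < t → μ {ω | t ≤ |X ω|} ≤ ENNReal.ofReal (t ^ (-τ))) :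
    Integrable (fun ω => max (|X ω| - a) 0) μ := by
  refine ⟨((hX.abs.sub_const a).max measurable_const).aestronglyMeasurable, ?_⟩
  rw [hasFiniteIntegral_iff_ofReal (ae_of_all _ fun ω => le_max_right (|X ω| - a) 0)]
  exact (lintegral_excess_le_of_tail hX ha hτ htail).trans_lt ENNReal.ofReal_lt_top

lemma integral_excess_le_of_tail (hX : Measurable X) (ha : 0 < a) (hτ : 1 < τ)
    (htail : ∀ t : ℝ, 0 < t → μ {ω | t ≤ |X ω|} ≤ ENNReal.ofReal (t ^ (-τ))) :
    ∫ ω, max (|X ω| - a) 0 ∂μ ≤ a ^ (1 - τ) / (τ - 1) := by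
  rw [integral_eq_lintegral_of_nonneg_ae (ae_of_all _ fun ω => le_max_right (|X ω| - a) 0)
    ((hX.abs.sub_const a).max measurable_const).aestronglyMeasurable]
  exact ENNReal.toReal_le_of_le_ofReal (div_nonneg (Real.rpow_nonneg ha.le _) (by linarith))
    (lintegral_excess_le_of_tail hX ha hτ htail)

end Tail

section OrderStatistic

variable {Ω : Type*} [MeasurableSpace Ω] {μ : Measure Ω} [IsProbabilityMeasure μ]
  {m : ℕ} {ξ : Ω → Fin m → ℝ} {a τ : ℝ}

lemma integral_ordAbs_le_of_tail (hξ : ∀ j, Measurable fun ω => ξ ω j) (ha : 0 < a)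
    (hτ : 1 < τ)
    (htail : ∀ j (t : ℝ), 0 < t → μ {ω | t ≤ |ξ ω j|} ≤ ENNReal.ofReal (t ^ (-τ)))
    (i : Fin m) :
    ∫ ω, ordAbs (ξ ω) i ∂μ ≤ a + m * (a ^ (1 - τ) / (τ - 1)) / ((i : ℕ) + 1) := by
  have hint j := integrable_excess_of_tail (hξ j) ha hτ (htail j)
  have hsum : Integrable (fun ω => ∑ j, max (|ξ ω j| - a) 0) μ :=
    integrable_finsetSum _ fun j _ => hint j
  calc ∫ ω, ordAbs (ξ ω) i ∂μ
      ≤ ∫ ω, a + (∑ j, max (|ξ ω j| - a) 0) / ((i : ℕ) + 1) ∂μ :=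
        integral_mono_of_nonneg (ae_of_all _ fun _ => abs_nonneg _)
          ((integrable_const a).add (hsum.div_const _))
          (ae_of_all _ fun ω => ordAbs_le_add_sum_excess (ξ ω) i a)
    _ = a + (∑ j, ∫ ω, max (|ξ ω j| - a) 0 ∂μ) / ((i : ℕ) + 1) := by
        rw [integral_add (integrable_const a) (hsum.div_const _), integral_const,
          probReal_univ, one_smul, integral_div, integral_finsetSum _ fun j _ => hint j]
    _ ≤ a + (∑ _j : Fin m, a ^ (1 - τ) / (τ - 1)) / ((i : ℕ) + 1) := by
        gcongr with j
        exact integral_excess_le_of_tail (hξ j) ha hτ (htail j)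
    _ = a + m * (a ^ (1 - τ) / (τ - 1)) / ((i : ℕ) + 1) := by
        rw [sum_const, card_univ, Fintype.card_fin, nsmul_eq_mul]

lemma integral_ordAbs_le_two_mul_rpow (hξ : ∀ j, Measurable fun ω => ξ ω j) (hτ : 2 ≤ τ)
    (htail : ∀ j (t : ℝ), 0 < t → μ {ω | t ≤ |ξ ω j|} ≤ ENNReal.ofReal (t ^ (-τ)))
    (i : Fin m) :
    ∫ ω, ordAbs (ξ ω) i ∂μ ≤ 2 * ((m : ℝ) / ((i : ℕ) + 1)) ^ (1 / τ) := by
  set r : ℝ := (m : ℝ) / ((i : ℕ) + 1)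
  set a := r ^ (1 / τ)
  have hr : 0 < r := div_pos (by exact_mod_cast i.pos) (by positivity)
  have ha : 0 < a := Real.rpow_pos_of_pos hr _
  have haτ : a ^ τ = r := by
    rw [← Real.rpow_mul hr.le, one_div_mul_cancel (by linarith), Real.rpow_one]
  have hexcess : m * (a ^ (1 - τ) / (τ - 1)) / ((i : ℕ) + 1) = a / (τ - 1) := by
    rw [show m * (a ^ (1 - τ) / (τ - 1)) / ((i : ℕ) + 1) = r * a ^ (1 - τ) / (τ - 1) by ring,
      ← haτ, ← Real.rpow_add ha, add_sub_cancel, Real.rpow_one]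
  calc ∫ ω, ordAbs (ξ ω) i ∂μ ≤ a + a / (τ - 1) :=
        hexcess ▸ integral_ordAbs_le_of_tail hξ ha (by linarith) htail i
    _ ≤ 2 * a := by
        have : a / (τ - 1) ≤ a := div_le_self ha.le (by linarith)
        linarith

end OrderStatistic

end Paper

/-- `i : Fin n` is 0-indexed: it is the paper's index `(i : ℕ) + 1`. -/
theorem statement_10 :
    ∃ C : ℝ, 0 < C ∧
      ∀ (τ : ℝ), 2 ≤ τ →
      ∀ (n : ℕ) (Ω : Type) (_ : MeasurableSpace Ω) (μ : Measure Ω)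
        (_ : IsProbabilityMeasure μ) (ξ : Ω → Fin n → ℝ),
        Paper.IIDCoords μ n ξ →
        (∀ i, ∫ ω, (ξ ω i) ^ 2 ∂μ ≤ 1) →
        (∀ i (t : ℝ), 0 < t → μ {ω | t ≤ |ξ ω i|} ≤ ENNReal.ofReal (t ^ (-τ))) →
        ∀ i : Fin n,
          ∫ ω, Paper.ordAbs (ξ ω) i /
              (Real.sqrt n *
                (C / Real.sqrt n * ((n : ℝ) / ((i : ℕ) + 1)) ^ ((1 : ℝ) / τ))) ∂μ ≤
            1 / 10 := by
  refine ⟨20, by norm_num, fun τ hτ n Ω _ μ _ ξ hiid _ htail i => ?_⟩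
  set a := ((n : ℝ) / ((i : ℕ) + 1)) ^ ((1 : ℝ) / τ)
  have ha : 0 < a := Real.rpow_pos_of_pos (div_pos (by exact_mod_cast i.pos) (by positivity)) _
  have hsqrt : Real.sqrt n ≠ 0 := (Real.sqrt_pos.mpr (by exact_mod_cast i.pos)).ne'
  have hden : Real.sqrt n * (20 / Real.sqrt n * a) = 20 * a := by field_simp
  rw [hden, integral_div, div_le_iff₀ (by positivity)]
  linarith [Paper.integral_ordAbs_le_two_mul_rpow hiid.1 hτ htail i]

end
end

section
/- Let γ_1 ≥ γ_2 ≥ … ≥ γ_m > 0 be a nonincreasing sequence of positive reals. Then for all vectors w, u ∈ ℝ^m: |⟨w, u⟩| ≤ ( max_{1 ≤ i ≤ m} |w|_(i)/γ_i ) · ‖u‖_γ, where |w|_(i) denotes the i-th largest value among |w_1|, …, |w_m| and ‖u‖_γ := Σ_{i=1}^m γ_i |u|_(i) is the sorted ℓ1 norm. -/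
open MeasureTheory ProbabilityTheory Matrix Finset
open scoped ENNReal NNReal

noncomputable section

/-! By the rearrangement inequality, `Σ |w_i| |u_i|` is at most `Σ |w|_(i) |u|_(i)`, the pairing of
the two decreasing rearrangements; then `|w|_(i) ≤ M γ_i` with `M = max_i |w|_(i) / γ_i` turns the
right-hand side into `M ‖u‖_γ`. -/

theorem Tuple.sum_mul_le_sum_mul_sort {α : Type*} [Semiring α] [LinearOrder α]
    [IsStrictOrderedRing α] [ExistsAddOfLE α] {n : ℕ} (f g : Fin n → α) :
    ∑ i, f i * g i ≤ ∑ i, f (Tuple.sort f i) * g (Tuple.sort g i) := by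
  set σ := Tuple.sort f
  set τ := Tuple.sort g
  have hmonovary : Monovary (f ∘ σ) (g ∘ τ) :=
    (Tuple.monotone_sort f).monovary (Tuple.monotone_sort g)
  calc ∑ i, f i * g i = ∑ i, f (σ i) * g (τ ((σ.trans τ.symm) i)) := by
        simp only [Equiv.trans_apply, Equiv.apply_symm_apply]
        exact (Equiv.sum_comp σ fun i => f i * g i).symm
    _ ≤ ∑ i, f (σ i) * g (τ i) := hmonovary.sum_mul_comp_perm_le_sum_mul

theorem le_iSup_div_mul {ι : Type*} [Finite ι] (f g : ι → ℝ) {i : ι} (hg : 0 < g i) :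
    f i ≤ (⨆ j, f j / g j) * g i :=
  (div_le_iff₀ hg).mp <| le_ciSup (f := fun j => f j / g j) (Set.finite_range _).bddAbove i

namespace Paper

theorem ordAbs_nonneg {m : ℕ} (v : Fin m → ℝ) (i : Fin m) : 0 ≤ ordAbs v i :=
  abs_nonneg _

theorem sum_abs_mul_abs_le_sum_ordAbs_mul_ordAbs {m : ℕ} (v w : Fin m → ℝ) :
    ∑ i, |v i| * |w i| ≤ ∑ i, ordAbs v i * ordAbs w i :=
  calc ∑ i, |v i| * |w i|
      ≤ ∑ i, |v (Tuple.sort (|v ·|) i)| * |w (Tuple.sort (|w ·|) i)| :=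
        Tuple.sum_mul_le_sum_mul_sort (|v ·|) (|w ·|)
    _ = ∑ i, ordAbs v i * ordAbs w i :=
        Fintype.sum_equiv Fin.revPerm _ _ fun i => by
          simp only [ordAbs, Fin.revPerm_apply, Fin.rev_rev]

end Paper

theorem statement_15_general (m : ℕ) (γ : Fin m → ℝ)
    (hpos : ∀ i, 0 < γ i) (w u : Fin m → ℝ) :
    |∑ i, w i * u i| ≤ (⨆ i : Fin m, Paper.ordAbs w i / γ i) * Paper.snorm γ u := by
  set M := ⨆ i : Fin m, Paper.ordAbs w i / γ i
  calc |∑ i, w i * u i| ≤ ∑ i, |w i| * |u i| := by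
        simpa only [abs_mul] using Finset.abs_sum_le_sum_abs (fun i => w i * u i) univ
    _ ≤ ∑ i, Paper.ordAbs w i * Paper.ordAbs u i :=
        Paper.sum_abs_mul_abs_le_sum_ordAbs_mul_ordAbs w u
    _ ≤ ∑ i, M * γ i * Paper.ordAbs u i := by
        gcongr with i
        · exact Paper.ordAbs_nonneg u i
        · exact le_iSup_div_mul (Paper.ordAbs w) γ (hpos i)
    _ = M * Paper.snorm γ u := by
        simp only [Paper.snorm, Finset.mul_sum, mul_assoc]

/-- dual inequality for the sorted ℓ¹ norm. -/
theorem statement_15 (m : ℕ) (hm : 0 < m) (γ : Fin m → ℝ)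
    (hpos : ∀ i, 0 < γ i) (hdec : Antitone γ) (w u : Fin m → ℝ) :
    |∑ i, w i * u i| ≤ (⨆ i : Fin m, Paper.ordAbs w i / γ i) * Paper.snorm γ u :=
  statement_15_general m γ hpos w u

end
end
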